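/- A one-sided infinite word b : ℕ → {0,1} that contains neither 00 nor 111 as a subword can be written as p w₁ w₂ w₃ ⋯ with p ∈ {ε, 1} and each w_i ∈ {101, 01}. -/
import Mathlib


/-- `w` occurs in the one-sided word `b` at position `n` (encoding 1 = `true`, 0 = `false`). -/
def OccursAt (b : ℕ → Bool) (n : ℕ) (w : List Bool) : Prop :=
  ∀ i : ℕ, i < w.length → b (n + i) = w.getD i false

theorem block_partition_one_sided (b : ℕ → Bool)
    (h00 : ¬ ∃ n : ℕ, b n = false ∧ b (n + 1) = false)
    (h111 : ¬ ∃ n : ℕ, b n = true ∧ b (n + 1) = true ∧ b (n + 2) = true) :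
    ∃ nseq : ℕ → ℕ, StrictMono nseq ∧ nseq 0 ≤ 1 ∧
      (nseq 0 = 1 → b 0 = true) ∧
      ∀ i : ℕ,
        (nseq (i + 1) = nseq i + 3 ∧ OccursAt b (nseq i) [true, false, true]) ∨
        (nseq (i + 1) = nseq i + 2 ∧ OccursAt b (nseq i) [false, true]) := by
  classical
  have h00' : ∀ n, b n = false → b (n + 1) = true := by
    intro n hn
    cases hb : b (n + 1)
    · exact absurd ⟨n, hn, hb⟩ h00
    · rfl
  have h111' : ∀ n, b n = true → b (n + 1) = true → b (n + 2) = false := by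
    intro n h1 h2
    cases hb : b (n + 2)
    · rfl
    · exact absurd ⟨n, h1, h2, hb⟩ h111
  set f : ℕ → ℕ := fun n => if b n = true then n + 3 else n + 2 with hf
  set n0 : ℕ := if b 0 = true ∧ b 1 = true then 1 else 0 with hn0
  have key : ∀ n, ¬(b n = true ∧ b (n + 1) = true) →
      ¬(b (f n) = true ∧ b (f n + 1) = true) := by
    intro n hinv
    by_cases hb : b n = true
    · have h1 : b (n + 1) = false := by
        cases hb1 : b (n + 1)
        · rfl
        · exact absurd ⟨hb, hb1⟩ hinv
      have h2 : b (n + 2) = true := h00' _ h1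
      simp only [hf, hb, if_true]
      rintro ⟨h3, h4⟩
      have h3' : b ((n + 2) + 1) = true := h3
      have h5 : b (n + 4) = false := h111' (n + 2) h2 h3'
      have h4' : b (n + 4) = true := h4
      simp [h5] at h4'
    · have hbf : b n = false := by
        cases hbn : b n
        · rfl
        · exact absurd hbn hb
      have h1 : b (n + 1) = true := h00' _ hbf
      simp only [hf, hb, if_false]
      rintro ⟨h3, h4⟩
      have h5 : b (n + 3) = false := h111' (n + 1) h1 h3
      have h4' : b (n + 3) = true := h4
      simp [h5] at h4'
  have inv0 : ¬(b n0 = true ∧ b (n0 + 1) = true) := by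
    by_cases h : b 0 = true ∧ b 1 = true
    · simp only [hn0, if_pos h]
      have h2 : b 2 = false := h111' 0 h.1 h.2
      rintro ⟨-, hc⟩
      have : b 2 = true := hc
      simp [h2] at this
    · simp only [hn0, if_neg h]
      exact h
  have inv : ∀ i, ¬(b (f^[i] n0) = true ∧ b (f^[i] n0 + 1) = true) := by
    intro i
    induction i with
    | zero => exact inv0
    | succ k ih =>
      rw [Function.iterate_succ_apply']
      exact key _ ih
  have flt : ∀ n, n < f n := by
    intro n
    simp only [hf]
    split <;> omega
  refine ⟨fun i => f^[i] n0, ?_, ?_, ?_, ?_⟩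
  · apply strictMono_nat_of_lt_succ
    intro i
    rw [Function.iterate_succ_apply']
    exact flt _
  · simp only [Function.iterate_zero_apply, hn0]
    split <;> omega
  · intro h
    simp only [Function.iterate_zero_apply, hn0] at h
    by_cases hc : b 0 = true ∧ b 1 = true
    · exact hc.1
    · rw [if_neg hc] at h; omega
  · intro i
    set n := f^[i] n0 with hn
    have hiter : f^[i + 1] n0 = f n := Function.iterate_succ_apply' f i n0
    by_cases hb : b n = true
    · left
      have h1 : b (n + 1) = false := by
        cases hb1 : b (n + 1)
        · rfl
        · exact absurd ⟨hb, hb1⟩ (inv i)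
      have h2 : b (n + 2) = true := h00' _ h1
      constructor
      · show f^[i + 1] n0 = n + _
        rw [hiter]; simp [hf, hb]
      · intro j hj
        simp only [List.length_cons, List.length_nil] at hj
        interval_cases j
        · simpa using hb
        · simpa using h1
        · simpa using h2
    · right
      have hbf : b n = false := by
        cases hbn : b n
        · rfl
        · exact absurd hbn hb
      have h1 : b (n + 1) = true := h00' _ hbf
      constructor
      · show f^[i + 1] n0 = n + _
        rw [hiter]; simp [hf, hb]
      · intro j hj
        simp only [List.length_cons, List.length_nil] at hj
        interval_cases j
        · simpa using hbf
        · simpa using h1
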